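/- arXiv:1506.02150 — 3 statements merged into one kernel-verified Lean document; each statement's English description precedes it below -/
import Mathlib

section
/- Let $g:[0,T]\to\mathbb{R}$ be continuously differentiable with $g(t_0)=0$ for some $t_0\in[0,T]$, and suppose $g'(t)=h(t)-\delta g(t)$ for a continuous function $h$ and a constant $\delta>0$. Then for all $t\in[t_0,T]$, $|g(t)| \le \left|\int_{t_0}^t h(s)\,ds\right| + \delta \int_{t_0}^t \left|\int_{t_0}^\tau h(s)\,ds\right| e^{\delta(t-\tau)}\,d\tau$. -/
/-! With `H τ = ∫_{t₀}^τ h`, the difference `u = g - H` solves `u' = -δ u - δ H` with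
`u(t₀) = 0`, so Duhamel's formula gives `g t = H t - δ ∫_{t₀}^t e^{-δ(t-τ)} H τ dτ`.
The claimed bound follows by taking absolute values, since `e^{-δ(t-τ)} ≤ e^{δ(t-τ)}`. -/

open MeasureTheory intervalIntegral Real Set

theorem eq_exp_mul_add_integral_of_hasDerivAt {u f : ℝ → ℝ} {δ a b : ℝ}
    (hu : ∀ s ∈ uIcc a b, HasDerivAt u (f s - δ * u s) s)
    (hf : IntervalIntegrable f volume a b) :
    u b = exp (δ * (a - b)) * u a + ∫ s in a..b, exp (δ * (s - b)) * f s := by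
  have hexp : ∀ s, HasDerivAt (fun s => exp (δ * s)) (δ * exp (δ * s)) s := fun s => by
    simpa [mul_comm] using ((hasDerivAt_id s).const_mul δ).exp
  have hderiv : ∀ s ∈ uIcc a b,
      HasDerivAt (fun s => exp (δ * s) * u s) (exp (δ * s) * f s) s := fun s hs =>
    ((hexp s).mul (hu s hs)).congr_deriv (by ring)
  have hint : IntervalIntegrable (fun s => exp (δ * s) * f s) volume a b :=
    hf.continuousOn_mul (by fun_prop)
  have hftc := integral_eq_sub_of_hasDerivAt hderiv hint
  have hshift : (∫ s in a..b, exp (δ * (s - b)) * f s)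
      = exp (-(δ * b)) * ∫ s in a..b, exp (δ * s) * f s := by
    rw [← intervalIntegral.integral_const_mul]
    congr 1 with s
    rw [← mul_assoc, ← exp_add]
    ring_nf
  have hinv : exp (-(δ * b)) * exp (δ * b) = 1 := by rw [← exp_add, neg_add_cancel, exp_zero]
  have hsplit : exp (δ * (a - b)) = exp (-(δ * b)) * exp (δ * a) := by rw [← exp_add]; ring_nf
  rw [hshift, hftc, hsplit]
  linear_combination (-u b) * hinv

theorem abs_integral_exp_mul_le {F : ℝ → ℝ} {δ a b : ℝ} (hδ : 0 ≤ δ) (hab : a ≤ b)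
    (hF : IntervalIntegrable F volume a b) :
    |∫ s in a..b, exp (δ * (s - b)) * F s| ≤ ∫ s in a..b, |F s| * exp (δ * (b - s)) := by
  calc |∫ s in a..b, exp (δ * (s - b)) * F s|
      ≤ ∫ s in a..b, |exp (δ * (s - b)) * F s| := abs_integral_le_integral_abs hab
    _ ≤ ∫ s in a..b, |F s| * exp (δ * (b - s)) := by
      refine integral_mono_on hab ?_ (hF.abs.mul_continuousOn (by fun_prop)) fun s hs => ?_
      · exact (hF.continuousOn_mul (by fun_prop)).abs
      · rw [abs_mul, abs_of_pos (exp_pos _), mul_comm]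
        gcongr <;> exact hs.2

/-- Grönwall-type bound: if `g` is C¹ on `[0,T]` with `g(t₀)=0` and `g' = h - δ g`
for continuous `h` and `δ > 0`, then for `t ∈ [t₀,T]`,
`|g(t)| ≤ |∫_{t₀}^t h| + δ ∫_{t₀}^t |∫_{t₀}^τ h| e^{δ(t-τ)} dτ`. -/
theorem stmt_1 (T t₀ δ : ℝ) (hδ : 0 < δ) (ht₀ : t₀ ∈ Set.Icc 0 T)
    (g h : ℝ → ℝ) (hh : Continuous h) (hg0 : g t₀ = 0)
    (hg : ∀ t ∈ Set.Icc (0:ℝ) T, HasDerivAt g (h t - δ * g t) t) :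
    ∀ t ∈ Set.Icc t₀ T,
      |g t| ≤ |∫ s in t₀..t, h s|
        + δ * ∫ τ in t₀..t, |∫ s in t₀..τ, h s| * Real.exp (δ * (t - τ)) := by
  rintro t ⟨ht₀t, htT⟩
  set H : ℝ → ℝ := fun τ => ∫ s in t₀..τ, h s
  have hH : ∀ τ, HasDerivAt H (h τ) τ := fun τ =>
    integral_hasDerivAt_right (hh.intervalIntegrable _ _)
      (hh.stronglyMeasurableAtFilter _ _) hh.continuousAt
  have hHcont : Continuous H := continuous_iff_continuousAt.2 fun τ => (hH τ).continuousAt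
  have hu : ∀ s ∈ uIcc t₀ t,
      HasDerivAt (fun s => g s - H s) (-δ * H s - δ * (g s - H s)) s := fun s hs => by
    rw [uIcc_of_le ht₀t] at hs
    exact ((hg s ⟨ht₀.1.trans hs.1, hs.2.trans htT⟩).sub (hH s)).congr_deriv (by ring)
  have hduhamel := eq_exp_mul_add_integral_of_hasDerivAt hu
    ((continuous_const.mul hHcont).intervalIntegrable _ _)
  have hgt : g t = H t - δ * ∫ s in t₀..t, exp (δ * (s - t)) * H s := by
    have hH0 : H t₀ = 0 := integral_same
    simp only [hg0, hH0, sub_zero, mul_zero, zero_add] at hduhamel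
    simp only [mul_left_comm _ (-δ), intervalIntegral.integral_const_mul] at hduhamel
    linarith
  calc |g t| ≤ |H t| + δ * |∫ s in t₀..t, exp (δ * (s - t)) * H s| := by
        rw [hgt]
        exact (abs_sub _ _).trans_eq (by rw [abs_mul, abs_of_pos hδ])
    _ ≤ _ := by
        gcongr
        exact abs_integral_exp_mul_le hδ.le ht₀t (hHcont.intervalIntegrable _ _)
end

section
/- With the weight $\varphi(x,t)=e^{\gamma\psi(x,t)}$, $\psi(x,t)=|x-x_0|^2-\beta((t-t_0)^2-M)$, $\sigma=s\gamma\varphi$, and $k\ge 0$: for every $w\in L^2(Q)$ with $Q=\Omega\times(0,T)$, there is a constant $C>0$ (independent of $s$ and $w$) such that $\int_Q \sigma^{2k+1}(x,t) e^{2s\varphi(x,t)} \left|\int_{t_0}^t w(x,\tau)\,d\tau\right|^2 dx\,dt \le C \int_Q \sigma^{2k}(x,t) e^{2s\varphi(x,t)} |w(x,t)|^2\, dx\,dt$. -/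
/-!
Write `σ = sγφ` and `e = exp (2sφ)`. Since `∂ₜφ = -2βγ(t - t₀)φ`, the weight satisfies
`∂ₜe = -4β (t - t₀) σ e`, so the kernel `|t - t₀| σ(t) e(t)` integrates, over the times `t`
lying beyond a fixed `τ` as seen from `t₀`, to at most `e(τ) / (4β)`.
For fixed `x`, Cauchy–Schwarz gives `|∫_{t₀}^t w|² ≤ |t - t₀| ∫_{t₀}^t |w|²`; since `φ` decreases
away from `t₀`, `σ(t)^{2k} ≤ σ(τ)^{2k}` for `τ` between `t₀` and `t`, and exchanging the `t`- and
`τ`-integrations yields the estimate with `C = 1 / (4β)`. The bound is proved for lower Lebesgue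
integrals, where Tonelli needs no integrability; boundedness of `Ω` makes the right-hand side
finite, which lets it be transferred back to Bochner integrals.
-/

open MeasureTheory intervalIntegral

local notation "E3" => EuclideanSpace ℝ (Fin 3)

open Set ENNReal
open scoped Interval

section LebesgueIntegral

variable {α : Type*} [MeasurableSpace α] {μ : Measure α}

theorem sq_lintegral_le_measure_univ_mul {f : α → ℝ≥0∞} (hf : AEMeasurable f μ) :
    (∫⁻ a, f a ∂μ) ^ 2 ≤ μ univ * ∫⁻ a, f a ^ 2 ∂μ := by
  have hsq : ∀ x : ℝ≥0∞, (x ^ (1 / (2 : ℝ))) ^ 2 = x := fun x => by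
    rw [← ENNReal.rpow_natCast, ← ENNReal.rpow_mul]; norm_num
  have hHolder := ENNReal.lintegral_mul_le_Lp_mul_Lq μ Real.HolderConjugate.two_two
    (aemeasurable_const (b := (1 : ℝ≥0∞))) hf
  simp only [Pi.mul_apply, one_mul, ENNReal.rpow_two, one_pow, lintegral_one] at hHolder
  simpa only [mul_pow, hsq] using pow_le_pow_left' hHolder 2

end LebesgueIntegral

theorem lintegral_Icc_ofReal_eq_sub_of_hasDerivAt {f f' : ℝ → ℝ} {a b : ℝ} (hab : a ≤ b)
    (hf : ∀ t ∈ Icc a b, HasDerivAt f (f' t) t) (hf' : ContinuousOn f' (Icc a b))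
    (hf'_nonneg : ∀ t ∈ Icc a b, 0 ≤ f' t) :
    ∫⁻ t in Icc a b, ENNReal.ofReal (f' t) = ENNReal.ofReal (f b - f a) := by
  rw [← ofReal_integral_eq_lintegral_ofReal (hf'.integrableOn_Icc)
      ((ae_restrict_iff' measurableSet_Icc).2 (ae_of_all _ hf'_nonneg)),
    integral_Icc_eq_integral_Ioc, ← intervalIntegral.integral_of_le hab,
    integral_eq_sub_of_hasDerivAt (by rwa [uIcc_of_le hab])
      (hf'.intervalIntegrable_of_Icc hab)]

section UIoc

variable {t₀ a b : ℝ}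

theorem measurableSet_mem_uIoc (t₀ : ℝ) : MeasurableSet {p : ℝ × ℝ | p.2 ∈ Ι t₀ p.1} :=
  (measurableSet_lt (measurable_const.min measurable_fst) measurable_snd).inter
    (measurableSet_le measurable_snd (measurable_const.max measurable_fst))

theorem measurableSet_setOf_mem_uIoc (t₀ τ : ℝ) : MeasurableSet {t : ℝ | τ ∈ Ι t₀ t} :=
  (measurableSet_mem_uIoc t₀).preimage (measurable_id.prodMk measurable_const)

theorem uIoc_subset_Ioc_of_mem (ht₀ : t₀ ∈ Icc a b) {t : ℝ} (ht : t ∈ Ioc a b) :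
    Ι t₀ t ⊆ Ioc a b := fun _ hτ =>
  ⟨(le_min ht₀.1 ht.1.le).trans_lt hτ.1, hτ.2.trans (max_le ht₀.2 ht.2)⟩

theorem setLIntegral_setLIntegral_uIoc_swap (ht₀ : t₀ ∈ Icc a b) {F : ℝ → ℝ → ℝ≥0∞}
    (hF : Measurable (Function.uncurry F)) :
    ∫⁻ t in Ioc a b, ∫⁻ τ in Ι t₀ t, F t τ =
      ∫⁻ τ in Ioc a b, ∫⁻ t in Ioc a b, {t | τ ∈ Ι t₀ t}.indicator (F · τ) t := by
  set S := {p : ℝ × ℝ | p.2 ∈ Ι t₀ p.1}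
  have hinner : ∀ t ∈ Ioc a b,
      ∫⁻ τ in Ι t₀ t, F t τ = ∫⁻ τ in Ioc a b, S.indicator (Function.uncurry F) (t, τ) :=
    fun t ht => by
      change _ = ∫⁻ τ in Ioc a b, (Ι t₀ t).indicator (F t) τ
      rw [setLIntegral_indicator measurableSet_uIoc,
        inter_eq_self_of_subset_left (uIoc_subset_Ioc_of_mem ht₀ ht)]
  rw [setLIntegral_congr_fun measurableSet_Ioc hinner]
  exact lintegral_lintegral_swap ((hF.indicator (measurableSet_mem_uIoc t₀)).aemeasurable)

theorem enorm_intervalIntegral_le_setLIntegral_uIoc (f : ℝ → ℝ) (a b : ℝ) :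
    ‖∫ τ in a..b, f τ‖ₑ ≤ ∫⁻ τ in Ι a b, ‖f τ‖ₑ := by
  rw [← ofReal_norm, norm_integral_eq_norm_integral_uIoc, ofReal_norm]
  exact enorm_integral_le_lintegral_enorm _

theorem measurable_setLIntegral_uIoc {α : Type*} [MeasurableSpace α] {u : α × ℝ → ℝ≥0∞}
    (hu : Measurable u) (t₀ : ℝ) :
    Measurable fun p : α × ℝ => ∫⁻ τ in Ι t₀ p.2, u (p.1, τ) := by
  have hS : MeasurableSet {q : (α × ℝ) × ℝ | q.2 ∈ Ι t₀ q.1.2} :=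
    (measurableSet_mem_uIoc t₀).preimage (measurable_fst.snd.prodMk measurable_snd)
  simp_rw [← lintegral_indicator measurableSet_uIoc]
  exact ((hu.comp (measurable_fst.fst.prodMk measurable_snd)).indicator hS).lintegral_prod_right'

end UIoc

section Hardy

variable {σ e ρ : ℝ → ℝ} {c t₀ a b : ℝ}

theorem setLIntegral_indicator_dist_mul_le (hc : 0 < c)
    (he : ∀ t, HasDerivAt e (-(c * ((t - t₀) * σ t * e t))) t) (hσ : Continuous σ)
    (hσ0 : ∀ t, 0 ≤ σ t) (he0 : ∀ t, 0 ≤ e t) {τ : ℝ} (hτ : τ ∈ Icc a b) :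
    ∫⁻ t in Ioc a b, {t | τ ∈ Ι t₀ t}.indicator
        (fun t => ENNReal.ofReal (|t - t₀| * σ t * e t)) t ≤ ENNReal.ofReal (e τ / c) := by
  have he_cont : Continuous e := continuous_iff_continuousAt.2 fun t => (he t).continuousAt
  have hD : Continuous fun t => (t - t₀) * σ t * e t := by fun_prop
  rw [setLIntegral_indicator (measurableSet_setOf_mem_uIoc t₀ τ)]
  -- The relevant `t` lie in `[a, τ]` if `τ ≤ t₀` and in `[τ, b]` otherwise; there `e / c`,
  -- resp. `-e / c`, is an antiderivative of the kernel.
  rcases le_or_gt τ t₀ with hτt₀ | hτt₀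
  · have hsub : {t | τ ∈ Ι t₀ t} ∩ Ioc a b ⊆ Icc a τ := by
      rintro t ⟨htτ, ht⟩
      rcases mem_uIoc.1 htτ with h | h
      · linarith [h.1]
      · exact ⟨ht.1.le, h.1.le⟩
    calc _ ≤ ∫⁻ t in Icc a τ, ENNReal.ofReal (-((t - t₀) * σ t * e t)) := by
          refine (lintegral_mono_set hsub).trans_eq
            (setLIntegral_congr_fun measurableSet_Icc fun t ht => ?_)
          rw [abs_of_nonpos (by linarith [ht.2]), neg_mul, neg_mul]
      _ = ENNReal.ofReal (e τ / c - e a / c) :=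
          lintegral_Icc_ofReal_eq_sub_of_hasDerivAt hτ.1
            (fun t _ => ((he t).div_const c).congr_deriv (by field_simp)) hD.neg.continuousOn
            fun t ht =>
              neg_nonneg.2 (mul_nonpos_of_nonpos_of_nonneg
                (mul_nonpos_of_nonpos_of_nonneg (by linarith [ht.2]) (hσ0 t)) (he0 t))
      _ ≤ ENNReal.ofReal (e τ / c) :=
          ENNReal.ofReal_le_ofReal (sub_le_self _ (div_nonneg (he0 a) hc.le))
  · have hsub : {t | τ ∈ Ι t₀ t} ∩ Ioc a b ⊆ Icc τ b := by
      rintro t ⟨htτ, ht⟩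
      rcases mem_uIoc.1 htτ with h | h
      · exact ⟨h.2, ht.2⟩
      · linarith [h.2]
    calc _ ≤ ∫⁻ t in Icc τ b, ENNReal.ofReal ((t - t₀) * σ t * e t) := by
          refine (lintegral_mono_set hsub).trans_eq
            (setLIntegral_congr_fun measurableSet_Icc fun t ht => ?_)
          rw [abs_of_nonneg (by linarith [ht.1])]
      _ = ENNReal.ofReal (-e b / c - -e τ / c) :=
          lintegral_Icc_ofReal_eq_sub_of_hasDerivAt hτ.2
            (fun t _ => ((he t).neg.div_const c).congr_deriv (by field_simp)) hD.continuousOn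
            fun t ht => mul_nonneg (mul_nonneg (by linarith [ht.1]) (hσ0 t)) (he0 t)
      _ ≤ ENNReal.ofReal (e τ / c) := ENNReal.ofReal_le_ofReal (by
          have := div_nonneg (he0 b) hc.le
          rw [neg_div, neg_div]; linarith)

theorem setLIntegral_mul_sq_setLIntegral_uIoc_le (hc : 0 < c)
    (he : ∀ t, HasDerivAt e (-(c * ((t - t₀) * σ t * e t))) t) (hσ : Continuous σ)
    (hσ0 : ∀ t, 0 ≤ σ t) (he0 : ∀ t, 0 ≤ e t) (hρ : Measurable ρ) (hρ0 : ∀ t, 0 ≤ ρ t)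
    (hρ_mono : ∀ t, ∀ τ ∈ Ι t₀ t, ρ t ≤ ρ τ) (ht₀ : t₀ ∈ Icc a b) {u : ℝ → ℝ≥0∞}
    (hu : Measurable u) :
    ∫⁻ t in Ioc a b, ENNReal.ofReal (ρ t * σ t * e t) * (∫⁻ τ in Ι t₀ t, u τ) ^ 2 ≤
      ENNReal.ofReal (1 / c) * ∫⁻ t in Ioc a b, ENNReal.ofReal (ρ t * e t) * u t ^ 2 := by
  have he_cont : Continuous e := continuous_iff_continuousAt.2 fun t => (he t).continuousAt
  set D : ℝ → ℝ≥0∞ := fun t => ENNReal.ofReal (|t - t₀| * σ t * e t)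
  set G : ℝ → ℝ≥0∞ := fun τ => ENNReal.ofReal (ρ τ) * u τ ^ 2
  have hD : Measurable D := by fun_prop
  have hG : Measurable G := by fun_prop
  -- Cauchy–Schwarz on `Ι t₀ t`, then `ρ t ≤ ρ τ` moves the weight to the integration variable.
  have hpoint : ∀ t, ENNReal.ofReal (ρ t * σ t * e t) * (∫⁻ τ in Ι t₀ t, u τ) ^ 2 ≤
      ∫⁻ τ in Ι t₀ t, D t * G τ := by
    intro t
    have hCS := sq_lintegral_le_measure_univ_mul (μ := volume.restrict (Ι t₀ t)) hu.aemeasurable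
    rw [Measure.restrict_apply_univ, Real.volume_uIoc] at hCS
    have hsplit : ∀ τ, ENNReal.ofReal (ρ t * σ t * e t) * (ENNReal.ofReal |t - t₀| * u τ ^ 2)
        = D t * (ENNReal.ofReal (ρ t) * u τ ^ 2) := fun τ => by
      simp only [D, ENNReal.ofReal_mul, hρ0, hσ0, abs_nonneg, mul_nonneg]
      ring
    calc _ ≤ ENNReal.ofReal (ρ t * σ t * e t) *
          (ENNReal.ofReal |t - t₀| * ∫⁻ τ in Ι t₀ t, u τ ^ 2) := by gcongr
      _ = ∫⁻ τ in Ι t₀ t, D t * (ENNReal.ofReal (ρ t) * u τ ^ 2) := by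
        simp only [← hsplit, lintegral_const_mul' _ _ ENNReal.ofReal_ne_top]
      _ ≤ ∫⁻ τ in Ι t₀ t, D t * G τ :=
        setLIntegral_mono' measurableSet_uIoc fun τ hτ => by
          simp only [G]
          gcongr
          exact hρ_mono t τ hτ
  calc _ ≤ ∫⁻ t in Ioc a b, ∫⁻ τ in Ι t₀ t, D t * G τ := lintegral_mono hpoint
    _ = ∫⁻ τ in Ioc a b, ∫⁻ t in Ioc a b, {t | τ ∈ Ι t₀ t}.indicator (D · * G τ) t :=
      setLIntegral_setLIntegral_uIoc_swap ht₀ (by fun_prop)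
    _ = ∫⁻ τ in Ioc a b, (∫⁻ t in Ioc a b, {t | τ ∈ Ι t₀ t}.indicator D t) * G τ := by
      refine lintegral_congr fun τ => ?_
      simp only [indicator_mul_left]
      exact lintegral_mul_const _ (hD.indicator (measurableSet_setOf_mem_uIoc t₀ τ))
    _ ≤ ∫⁻ τ in Ioc a b, ENNReal.ofReal (e τ / c) * G τ :=
      setLIntegral_mono' measurableSet_Ioc fun τ hτ => by
        gcongr
        exact setLIntegral_indicator_dist_mul_le hc he hσ hσ0 he0 (Ioc_subset_Icc_self hτ)
    _ = _ := by
      rw [← lintegral_const_mul' _ _ ENNReal.ofReal_ne_top]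
      refine lintegral_congr fun τ => ?_
      simp only [G, ← mul_assoc, ← ENNReal.ofReal_mul (by positivity : (0:ℝ) ≤ 1 / c),
        ← ENNReal.ofReal_mul (div_nonneg (he0 τ) hc.le)]
      ring_nf

end Hardy

section IteratedIntegral

variable {α β : Type*} [MeasurableSpace α] [MeasurableSpace β] {μ : Measure α} {ν : Measure β}

theorem ofReal_integral_integral_le_lintegral_lintegral {f : α → β → ℝ} {G : α → β → ℝ≥0∞}
    (hfG : ∀ᵐ y ∂ν, ∀ᵐ x ∂μ, ‖f x y‖ₑ ≤ G x y) :
    ENNReal.ofReal (∫ y, ∫ x, f x y ∂μ ∂ν) ≤ ∫⁻ y, ∫⁻ x, G x y ∂μ ∂ν :=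
  calc ENNReal.ofReal (∫ y, ∫ x, f x y ∂μ ∂ν)
      ≤ ∫⁻ y, ‖∫ x, f x y ∂μ‖ₑ ∂ν :=
        (Real.ofReal_le_enorm _).trans (enorm_integral_le_lintegral_enorm _)
    _ ≤ ∫⁻ y, ∫⁻ x, G x y ∂μ ∂ν := lintegral_mono_ae <| hfG.mono fun _ hy =>
      (enorm_integral_le_lintegral_enorm _).trans (lintegral_mono_ae hy)

theorem ofReal_integral_integral_eq_lintegral_prod [SFinite μ] [SFinite ν] {f : α × β → ℝ}
    (hf : Integrable f (μ.prod ν)) (hf0 : 0 ≤ᵐ[μ.prod ν] f) :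
    ENNReal.ofReal (∫ y, ∫ x, f (x, y) ∂μ ∂ν) = ∫⁻ p, ENNReal.ofReal (f p) ∂(μ.prod ν) := by
  rw [← integral_prod_symm f hf, ofReal_integral_eq_lintegral_ofReal hf hf0]

end IteratedIntegral

theorem ae_ae_enorm_mul_sq_intervalIntegral_le {α : Type*} [MeasurableSpace α] {μ : Measure α}
    {t₀ a b : ℝ} (ht₀ : t₀ ∈ Icc a b) {W w : α → ℝ → ℝ} (hW : ∀ x t, 0 ≤ W x t)
    {g : α × ℝ → ℝ} (hwg : Function.uncurry w =ᵐ[μ.prod (volume.restrict (Ioc a b))] g) :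
    ∀ᵐ t ∂volume.restrict (Ioc a b), ∀ᵐ x ∂μ, ‖W x t * |∫ τ in t₀..t, w x τ| ^ 2‖ₑ ≤
      ENNReal.ofReal (W x t) * (∫⁻ τ in Ι t₀ t, ‖g (x, τ)‖ₑ) ^ 2 := by
  refine ae_restrict_of_forall_mem measurableSet_Ioc fun t ht =>
    (Measure.ae_ae_of_ae_prod hwg).mono fun x hx => ?_
  have hsec : ∀ᵐ τ ∂volume.restrict (Ι t₀ t), ‖w x τ‖ₑ = ‖g (x, τ)‖ₑ :=
    (ae_restrict_of_ae_restrict_of_subset (uIoc_subset_Ioc_of_mem ht₀ ht) hx).mono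
      fun τ hτ => congrArg _ hτ
  rw [enorm_mul, Real.enorm_of_nonneg (hW x t), enorm_pow, Real.enorm_abs,
    ← lintegral_congr_ae hsec]
  gcongr
  exact enorm_intervalIntegral_le_setLIntegral_uIoc _ _ _

section CarlemanWeight

variable {E : Type*} [NormedAddCommGroup E]

noncomputable def carlemanPhi (x₀ : E) (t₀ β γ M : ℝ) (x : E) (t : ℝ) : ℝ :=
  Real.exp (γ * (‖x - x₀‖ ^ 2 - β * ((t - t₀) ^ 2 - M)))

variable {x₀ : E} {t₀ β γ M s k a b : ℝ}

local notation "φ" => carlemanPhi x₀ t₀ β γ M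

theorem carlemanPhi_pos (x : E) (t : ℝ) : 0 < φ x t := Real.exp_pos _

theorem continuous_carlemanPhi : Continuous (Function.uncurry φ) := by
  unfold carlemanPhi; fun_prop

theorem hasDerivAt_exp_carlemanPhi (x : E) (t : ℝ) :
    HasDerivAt (fun t => Real.exp (2 * s * φ x t))
      (-(4 * β * ((t - t₀) * (s * γ * φ x t) * Real.exp (2 * s * φ x t)))) t := by
  have hψ : HasDerivAt (fun t => γ * (‖x - x₀‖ ^ 2 - β * ((t - t₀) ^ 2 - M)))
      (γ * -(β * (2 * (t - t₀)))) t := by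
    refine (((((hasDerivAt_id t).sub_const t₀).pow 2).sub_const M).const_mul β).const_sub _
      |>.const_mul γ |>.congr_deriv ?_
    simp
  unfold carlemanPhi
  convert ((hψ.exp.const_mul (2 * s)).exp) using 1
  ring

theorem carlemanPhi_le_of_mem_uIoc (hβ : 0 ≤ β) (hγ : 0 ≤ γ) (x : E) {t τ : ℝ}
    (hτ : τ ∈ Ι t₀ t) : φ x t ≤ φ x τ := by
  have hsq : (τ - t₀) ^ 2 ≤ (t - t₀) ^ 2 := by
    rcases mem_uIoc.1 hτ with h | h <;> nlinarith [h.1, h.2]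
  unfold carlemanPhi
  gcongr

theorem carlemanPhi_le_of_norm_le (hβ : 0 ≤ β) (hγ : 0 ≤ γ) {x : E} {r : ℝ}
    (hx : ‖x - x₀‖ ≤ r) (t : ℝ) : φ x t ≤ Real.exp (γ * (r ^ 2 + β * M)) := by
  unfold carlemanPhi
  gcongr
  nlinarith [pow_le_pow_left₀ (norm_nonneg _) hx 2, mul_nonneg hβ (sq_nonneg (t - t₀))]

theorem setLIntegral_carleman_primitive_le (hβ : 0 < β) (hγ : 0 ≤ γ) (hs : 0 ≤ s) (hk : 0 ≤ k)
    (ht₀ : t₀ ∈ Icc a b) (x : E) {u : ℝ → ℝ≥0∞} (hu : Measurable u) :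
    ∫⁻ t in Ioc a b, ENNReal.ofReal ((s * γ * φ x t) ^ (2 * k + 1) * Real.exp (2 * s * φ x t)) *
        (∫⁻ τ in Ι t₀ t, u τ) ^ 2 ≤
      ENNReal.ofReal (1 / (4 * β)) * ∫⁻ t in Ioc a b,
        ENNReal.ofReal ((s * γ * φ x t) ^ (2 * k) * Real.exp (2 * s * φ x t)) * u t ^ 2 := by
  have hσ0 : ∀ t, 0 ≤ s * γ * φ x t := fun t => by
    have := carlemanPhi_pos (x₀ := x₀) (t₀ := t₀) (β := β) (γ := γ) (M := M) x t
    positivity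
  have hσ_mono : ∀ t, ∀ τ ∈ Ι t₀ t, s * γ * φ x t ≤ s * γ * φ x τ := fun t τ hτ => by
    gcongr
    exact carlemanPhi_le_of_mem_uIoc hβ.le hγ x hτ
  have hsplit : ∀ t,
      (s * γ * φ x t) ^ (2 * k + 1) = (s * γ * φ x t) ^ (2 * k) * (s * γ * φ x t) := fun t => by
    rw [Real.rpow_add' (hσ0 t) (by linarith), Real.rpow_one]
  simp only [hsplit]
  exact setLIntegral_mul_sq_setLIntegral_uIoc_le (by positivity)
    (fun t => hasDerivAt_exp_carlemanPhi x t) (by unfold carlemanPhi; fun_prop) hσ0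
    (fun t => (Real.exp_pos _).le) (by unfold carlemanPhi; fun_prop)
    (fun t => Real.rpow_nonneg (hσ0 t) _)
    (fun t τ hτ => Real.rpow_le_rpow (hσ0 t) (hσ_mono t τ hτ) (by linarith)) ht₀ hu

variable [MeasurableSpace E] [OpensMeasurableSpace E] {μ : Measure E}

theorem lintegral_lintegral_carleman_primitive_le [SFinite μ] (hβ : 0 < β) (hγ : 0 ≤ γ)
    (hs : 0 ≤ s) (hk : 0 ≤ k) (ht₀ : t₀ ∈ Icc a b) {u : E × ℝ → ℝ≥0∞} (hu : Measurable u) :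
    ∫⁻ t in Ioc a b, ∫⁻ x, ENNReal.ofReal
        ((s * γ * φ x t) ^ (2 * k + 1) * Real.exp (2 * s * φ x t)) *
          (∫⁻ τ in Ι t₀ t, u (x, τ)) ^ 2 ∂μ ≤
      ENNReal.ofReal (1 / (4 * β)) * ∫⁻ p, ENNReal.ofReal
        ((s * γ * φ p.1 p.2) ^ (2 * k) * Real.exp (2 * s * φ p.1 p.2)) * u p ^ 2
          ∂(μ.prod (volume.restrict (Ioc a b))) := by
  have hφ : Measurable fun p : E × ℝ => φ p.1 p.2 := continuous_carlemanPhi.measurable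
  have hP := measurable_setLIntegral_uIoc hu t₀
  have hL : Measurable fun p : E × ℝ => ENNReal.ofReal
      ((s * γ * φ p.1 p.2) ^ (2 * k + 1) * Real.exp (2 * s * φ p.1 p.2)) *
        (∫⁻ τ in Ι t₀ p.2, u (p.1, τ)) ^ 2 := by fun_prop
  have hR : Measurable fun p : E × ℝ => ENNReal.ofReal
      ((s * γ * φ p.1 p.2) ^ (2 * k) * Real.exp (2 * s * φ p.1 p.2)) * u p ^ 2 := by fun_prop
  rw [lintegral_lintegral_swap (by exact (hL.comp measurable_swap).aemeasurable),
    lintegral_prod _ hR.aemeasurable,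
    ← lintegral_const_mul' _ _ ENNReal.ofReal_ne_top]
  exact lintegral_mono fun x =>
    setLIntegral_carleman_primitive_le hβ hγ hs hk ht₀ x (hu.comp measurable_prodMk_left)

theorem integrable_carleman_weight_mul_sq (hβ : 0 ≤ β) (hγ : 0 ≤ γ) (hs : 0 ≤ s) (hk : 0 ≤ k)
    {r : ℝ} (hμ : ∀ᵐ x ∂μ, ‖x - x₀‖ ≤ r) {ν : Measure ℝ} [SFinite ν] {w : E × ℝ → ℝ}
    (hw : MemLp w 2 (μ.prod ν)) :
    Integrable (fun p => (s * γ * φ p.1 p.2) ^ (2 * k) * Real.exp (2 * s * φ p.1 p.2) * |w p| ^ 2)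
      (μ.prod ν) := by
  set Φ := Real.exp (γ * (r ^ 2 + β * M))
  have hbound : ∀ᵐ p ∂μ.prod ν, ‖(s * γ * φ p.1 p.2) ^ (2 * k) * Real.exp (2 * s * φ p.1 p.2)‖ ≤
      (s * γ * Φ) ^ (2 * k) * Real.exp (2 * s * Φ) := by
    refine (Measure.quasiMeasurePreserving_fst.ae hμ).mono fun p hp => ?_
    have hφΦ := carlemanPhi_le_of_norm_le (t₀ := t₀) (M := M) hβ hγ hp p.2
    have hφ0 : 0 ≤ φ p.1 p.2 := (carlemanPhi_pos _ _).le
    rw [Real.norm_of_nonneg (by positivity)]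
    gcongr
  have hφ : Measurable fun p : E × ℝ => φ p.1 p.2 := continuous_carlemanPhi.measurable
  simp_rw [sq_abs]
  exact hw.integrable_sq.bdd_mul (Measurable.aestronglyMeasurable (by fun_prop)) hbound

theorem carleman_primitive_estimate [SFinite μ] (hβ : 0 < β) (hγ : 0 ≤ γ) (hs : 0 ≤ s)
    (hk : 0 ≤ k) (ht₀ : t₀ ∈ Icc a b) {r : ℝ} (hμ : ∀ᵐ x ∂μ, ‖x - x₀‖ ≤ r) {w : E → ℝ → ℝ}
    (hw : MemLp (Function.uncurry w) 2 (μ.prod (volume.restrict (Ioc a b)))) :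
    ∫ t in a..b, ∫ x, (s * γ * φ x t) ^ (2 * k + 1) * Real.exp (2 * s * φ x t) *
        |∫ τ in t₀..t, w x τ| ^ 2 ∂μ ≤
      1 / (4 * β) * ∫ t in a..b, ∫ x, (s * γ * φ x t) ^ (2 * k) * Real.exp (2 * s * φ x t) *
        |w x t| ^ 2 ∂μ := by
  obtain ⟨g, hg, hwg⟩ := hw.1
  have hRint := integrable_carleman_weight_mul_sq (t₀ := t₀) (M := M) hβ.le hγ hs hk hμ hw
  have hW : ∀ (q : ℝ) x t, 0 ≤ (s * γ * φ x t) ^ q * Real.exp (2 * s * φ x t) := fun q x t => by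
    have := carlemanPhi_pos (x₀ := x₀) (t₀ := t₀) (β := β) (γ := γ) (M := M) x t
    positivity
  have hRHS := fun x t => mul_nonneg (hW (2 * k) x t) (sq_nonneg |w x t|)
  have hR := ofReal_integral_integral_eq_lintegral_prod hRint (ae_of_all _ fun p => hRHS p.1 p.2)
  dsimp only [Function.uncurry_apply_pair] at hR
  have hab := ht₀.1.trans ht₀.2
  rw [intervalIntegral.integral_of_le hab, intervalIntegral.integral_of_le hab,
    ← ENNReal.ofReal_le_ofReal_iff (mul_nonneg (by positivity)
      (integral_nonneg fun t => integral_nonneg fun x => hRHS x t)),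
    ENNReal.ofReal_mul (by positivity), hR]
  calc _ ≤ _ := ofReal_integral_integral_le_lintegral_lintegral
        (ae_ae_enorm_mul_sq_intervalIntegral_le ht₀ (hW _) hwg)
    _ ≤ _ := lintegral_lintegral_carleman_primitive_le hβ hγ hs hk ht₀ hg.measurable.enorm
    _ = _ := by
      congr 1
      refine lintegral_congr_ae (hwg.mono fun p hp => ?_)
      dsimp only
      rw [ENNReal.ofReal_mul (hW _ _ _), ENNReal.ofReal_pow (abs_nonneg _),
        ← Real.enorm_eq_ofReal_abs, hp]

end CarlemanWeight

theorem stmt_3_general (Ω : Set E3) (hΩo : IsOpen Ω) (hΩb : Bornology.IsBounded Ω)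
    (x₀ : E3)
    (T t₀ β γ M k : ℝ) (ht₀ : t₀ ∈ Set.Ioo 0 T)
    (hβ : 0 < β) (hγ : 0 < γ) (hk : 0 ≤ k) :
    ∃ C > 0, ∀ s > 0, ∀ w : E3 → ℝ → ℝ,
      MemLp (fun p : E3 × ℝ => w p.1 p.2) 2
        ((volume.restrict Ω).prod (volume.restrict (Set.Ioc 0 T))) →
      (∫ t in (0:ℝ)..T, ∫ x in Ω,
          (s * γ * Real.exp (γ * (‖x - x₀‖ ^ 2 - β * ((t - t₀) ^ 2 - M)))) ^ (2 * k + 1) *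
            Real.exp (2 * s * Real.exp (γ * (‖x - x₀‖ ^ 2 - β * ((t - t₀) ^ 2 - M)))) *
            |∫ τ in t₀..t, w x τ| ^ 2)
        ≤ C * ∫ t in (0:ℝ)..T, ∫ x in Ω,
            (s * γ * Real.exp (γ * (‖x - x₀‖ ^ 2 - β * ((t - t₀) ^ 2 - M)))) ^ (2 * k) *
              Real.exp (2 * s * Real.exp (γ * (‖x - x₀‖ ^ 2 - β * ((t - t₀) ^ 2 - M)))) *
              |w x t| ^ 2 := by
  refine ⟨1 / (4 * β), by positivity, fun s hs w hw => ?_⟩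
  obtain ⟨r, hr⟩ := hΩb.subset_closedBall x₀
  exact carleman_primitive_estimate hβ hγ.le hs.le hk (Ioo_subset_Icc_self ht₀)
    (ae_restrict_of_forall_mem hΩo.measurableSet fun x hx => mem_closedBall_iff_norm.1 (hr hx)) hw

/-- Lemma 2.5: with `ψ(x,t) = |x-x₀|² - β((t-t₀)² - M)`, `φ = e^{γψ}`, `σ = sγφ`
and `k ≥ 0`, there is `C > 0` (independent of `s` and `w`) such that
`∫_Q σ^{2k+1} e^{2sφ} |∫_{t₀}^t w|² ≤ C ∫_Q σ^{2k} e^{2sφ} |w|²`. -/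
theorem stmt_3 (Ω : Set E3) (hΩo : IsOpen Ω) (hΩb : Bornology.IsBounded Ω)
    (x₀ : E3) (hx₀ : x₀ ∉ closure Ω)
    (T t₀ β γ M k : ℝ) (hT : 0 < T) (ht₀ : t₀ ∈ Set.Ioo 0 T)
    (hβ : 0 < β) (hγ : 0 < γ) (hM : 0 < M) (hk : 0 ≤ k) :
    ∃ C > 0, ∀ s > 0, ∀ w : E3 → ℝ → ℝ,
      MemLp (fun p : E3 × ℝ => w p.1 p.2) 2
        ((volume.restrict Ω).prod (volume.restrict (Set.Ioc 0 T))) →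
      (∫ t in (0:ℝ)..T, ∫ x in Ω,
          (s * γ * Real.exp (γ * (‖x - x₀‖ ^ 2 - β * ((t - t₀) ^ 2 - M)))) ^ (2 * k + 1) *
            Real.exp (2 * s * Real.exp (γ * (‖x - x₀‖ ^ 2 - β * ((t - t₀) ^ 2 - M)))) *
            |∫ τ in t₀..t, w x τ| ^ 2)
        ≤ C * ∫ t in (0:ℝ)..T, ∫ x in Ω,
            (s * γ * Real.exp (γ * (‖x - x₀‖ ^ 2 - β * ((t - t₀) ^ 2 - M)))) ^ (2 * k) *
              Real.exp (2 * s * Real.exp (γ * (‖x - x₀‖ ^ 2 - β * ((t - t₀) ^ 2 - M)))) *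
              |w x t| ^ 2 :=
  stmt_3_general Ω hΩo hΩb x₀ T t₀ β γ M k ht₀ hβ hγ hk
end

section
/- Let $\Omega\subset\mathbb{R}^3$ be a bounded open set with smooth boundary, $x_0\in\mathbb{R}^3$, and let $P(x,D)f = \gamma(x)\cdot\nabla f + \gamma_0(x) f$ with $\gamma\in (W^{1,\infty}(\Omega))^3$, $\gamma_0\in W^{1,\infty}(\Omega)$, and $|\gamma(x)\cdot(x-x_0)|\ge c_0>0$ on $\overline{\Omega}$. Let $\rho(x)=e^{\gamma_1(|x-x_0|^2+\beta M)}$ for constants $\gamma_1,\beta,M>0$. Then there exist $s_*>0$ and $C>0$ such that for all $s\ge s_*$ and all $f\in H^2(\Omega)$ with $f=0$ and $\nabla f=0$ on $\partial\Omega$, $s^2\int_\Omega e^{2s\rho}|f|^2\,dx \le C\int_\Omega e^{2s\rho}|P(x,D)f|^2\,dx$. -/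
/-!
Write `g = γ·(x - x₀)`, `φ = e^{2sρ}` and `U = g γ`. On `Ω` one has the pointwise identity
`∇(φ f²)·U = 4sγ₁ρφ g² f² + 2φ g f (Pf - γ₀ f)`. Since `f = 0` on `∂Ω`, the function `1_Ω φ f²`
is `C¹` with compact support, so integrating the left side by parts against the Lipschitz field
`U` (coordinatewise, via Rademacher) bounds its integral by `3 Lip(U) ∫_Ω φ f²`. On the right,
Young's inequality absorbs the cross term `2φ g f Pf` into half of the first term, and
`|g| ≥ c₀`, `ρ ≥ e^{γ₁βM}` make what is left at least `2sγ₁e^{γ₁βM}c₀² φ f²`. For `s` large this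
dominates the `O(1) ∫_Ω φ f²` error terms, which leaves `s² ∫_Ω φ f² ≲ ∫_Ω φ (Pf)²`.
-/

open MeasureTheory

local notation "E3" => EuclideanSpace ℝ (Fin 3)

open Set Filter Asymptotics
open scoped NNReal RealInnerProductSpace

section IndicatorDerivative

variable {𝕜 E F : Type*} [NontriviallyNormedField 𝕜] [NormedAddCommGroup E] [NormedSpace 𝕜 E]
  [NormedAddCommGroup F] [NormedSpace 𝕜 F] {s : Set E} {h : E → F}

theorem hasFDerivAt_indicator_of_frontier {x : E} (hx : DifferentiableAt 𝕜 h x)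
    (hfr : ∀ y ∈ frontier s, h y = 0 ∧ fderiv 𝕜 h y = 0) :
    HasFDerivAt (s.indicator h) (s.indicator (fderiv 𝕜 h) x) x := by
  by_cases hxi : x ∈ interior s
  · rw [indicator_of_mem (interior_subset hxi)]
    refine hx.hasFDerivAt.congr_of_eventuallyEq ?_
    filter_upwards [mem_interior_iff_mem_nhds.1 hxi] with y hy using indicator_of_mem hy h
  by_cases hxc : x ∈ closure s
  · obtain ⟨hx0, hx0'⟩ := hfr x ⟨hxc, hxi⟩
    have hind : s.indicator (fderiv 𝕜 h) x = 0 := by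
      by_cases hxs : x ∈ s <;> simp [hxs, hx0']
    rw [hind, hasFDerivAt_iff_isLittleO_nhds_zero]
    have hsmall := hasFDerivAt_iff_isLittleO_nhds_zero.1 (hx0' ▸ hx.hasFDerivAt)
    simp only [hx0, sub_zero, zero_apply] at hsmall
    have hx0s : s.indicator h x = 0 := by
      by_cases hxs : x ∈ s <;> simp [hxs, hx0]
    simp only [hx0s, sub_zero, zero_apply]
    exact (isBigO_of_le _ fun y ↦ norm_indicator_le_norm_self _ _).trans_isLittleO hsmall
  · rw [indicator_of_notMem (fun hxs ↦ hxc (subset_closure hxs))]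
    refine (hasFDerivAt_const 0 x).congr_of_eventuallyEq ?_
    filter_upwards [isClosed_closure.isOpen_compl.mem_nhds hxc] with y hy
    exact indicator_of_notMem (fun hys ↦ hy (subset_closure hys)) h

theorem fderiv_indicator_of_frontier (hh : Differentiable 𝕜 h)
    (hfr : ∀ y ∈ frontier s, h y = 0 ∧ fderiv 𝕜 h y = 0) :
    fderiv 𝕜 (s.indicator h) = s.indicator (fderiv 𝕜 h) :=
  funext fun x ↦ (hasFDerivAt_indicator_of_frontier (hh x) hfr).fderiv

theorem contDiff_one_indicator_of_frontier (hh : ContDiff 𝕜 1 h)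
    (hfr : ∀ y ∈ frontier s, h y = 0 ∧ fderiv 𝕜 h y = 0) :
    ContDiff 𝕜 1 (s.indicator h) := by
  have hd := hh.differentiable one_ne_zero
  refine contDiff_one_iff_fderiv.2
    ⟨fun x ↦ (hasFDerivAt_indicator_of_frontier (hd x) hfr).differentiableAt, ?_⟩
  rw [fderiv_indicator_of_frontier hd hfr]
  exact continuous_indicator (fun y hy ↦ (hfr y hy).2)
    (hh.continuous_fderiv one_ne_zero).continuousOn

theorem fderiv_indicator_apply_of_frontier (hh : Differentiable 𝕜 h)
    (hfr : ∀ y ∈ frontier s, h y = 0 ∧ fderiv 𝕜 h y = 0) (U : E → E) :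
    (fun x ↦ fderiv 𝕜 (s.indicator h) x (U x)) = s.indicator (fun x ↦ fderiv 𝕜 h x (U x)) := by
  ext x
  by_cases hx : x ∈ s <;> simp [fderiv_indicator_of_frontier hh hfr, hx]

end IndicatorDerivative

section IntegrationByParts

variable {E : Type*} [NormedAddCommGroup E] [NormedSpace ℝ E] [MeasurableSpace E] [BorelSpace E]
  {μ : Measure E} [μ.IsAddHaarMeasure] {Z : E → ℝ}

theorem abs_integral_mul_fderiv_le [FiniteDimensional ℝ E] {u : E → ℝ} {L : ℝ≥0}
    (hu : LipschitzWith L u) (hZ : ContDiff ℝ 1 Z) (hZc : HasCompactSupport Z) (v : E) :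
    |∫ x, u x * fderiv ℝ Z x v ∂μ| ≤ L * ‖v‖ * ∫ x, |Z x| ∂μ := by
  obtain ⟨C, hZC⟩ := hZ.lipschitzWith_of_hasCompactSupport hZc one_ne_zero
  have hZd := hZ.differentiable one_ne_zero
  have hparts : ∫ x, u x * fderiv ℝ Z x v ∂μ = -∫ x, lineDeriv ℝ u x v * Z x ∂μ := by
    rw [hu.integral_lineDeriv_mul_eq hZC hZc v, ← integral_neg]
    congr 1 with x
    rw [(hZd x).lineDeriv_eq_fderiv, map_neg]
    ring
  rw [hparts, abs_neg, ← integral_const_mul, ← Real.norm_eq_abs]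
  refine norm_integral_le_of_norm_le
    ((hZ.continuous.integrable_of_hasCompactSupport hZc).abs.const_mul _)
    (Eventually.of_forall fun x ↦ ?_)
  rw [norm_mul, Real.norm_eq_abs (Z x)]
  exact mul_le_mul_of_nonneg_right (norm_lineDeriv_le_of_lipschitz ℝ hu) (abs_nonneg _)

theorem integrable_mul_fderiv {u : E → ℝ} (hu : Continuous u) (hZ : ContDiff ℝ 1 Z)
    (hZc : HasCompactSupport Z) (v : E) : Integrable (fun x ↦ u x * fderiv ℝ Z x v) μ := by
  refine (hu.mul ((hZ.continuous_fderiv one_ne_zero).clm_apply continuous_const))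
    |>.integrable_of_hasCompactSupport ?_
  exact hZc.mono' fun x hx ↦ support_fderiv_subset ℝ fun h0 ↦ hx (by simp [h0])

end IntegrationByParts

theorem Bornology.IsBounded.hasCompactSupport_indicator {X M : Type*} [PseudoMetricSpace X]
    [ProperSpace X] [Zero M] {s : Set X} (hs : Bornology.IsBounded s) (h : X → M) :
    HasCompactSupport (s.indicator h) :=
  .of_support_subset_isCompact hs.isCompact_closure (support_indicator_subset.trans subset_closure)

section Divergence

variable {ι : Type*} [Fintype ι] {μ : Measure (EuclideanSpace ℝ ι)}
  [μ.IsAddHaarMeasure] {U : EuclideanSpace ℝ ι → EuclideanSpace ℝ ι} {K : ℝ≥0}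

theorem ContinuousLinearMap.apply_eq_sum_mul_single [DecidableEq ι]
    (L : EuclideanSpace ℝ ι →L[ℝ] ℝ) (w : EuclideanSpace ℝ ι) :
    L w = ∑ i, w i * L (EuclideanSpace.single i 1) := by
  conv_lhs => rw [← (EuclideanSpace.basisFun ι ℝ).sum_repr w]
  simp [map_sum, map_smul]

theorem exists_lipschitzWith_fderiv_apply_eq_sum [DecidableEq ι] {Z : EuclideanSpace ℝ ι → ℝ}
    {t : Set (EuclideanSpace ℝ ι)} (hU : LipschitzOnWith K U t) (hZt : tsupport Z ⊆ t) :
    ∃ u : ι → EuclideanSpace ℝ ι → ℝ, (∀ i, LipschitzWith K (u i)) ∧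
      ∀ x, fderiv ℝ Z x (U x) = ∑ i, u i x * fderiv ℝ Z x (EuclideanSpace.single i 1) := by
  have hcoord (i : ι) : LipschitzOnWith K (fun x ↦ U x i) t :=
    LipschitzOnWith.of_dist_le_mul fun x hx y hy ↦
      (PiLp.dist_apply_le _ _ i).trans (hU.dist_le_mul x hx y hy)
  choose u hu hUu using fun i ↦ (hcoord i).extend_real
  refine ⟨u, hu, fun x ↦ ?_⟩
  rw [ContinuousLinearMap.apply_eq_sum_mul_single]
  by_cases hx : x ∈ t
  · exact Finset.sum_congr rfl fun i _ ↦ congrArg (· * _) (hUu i hx)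
  · have h0 : fderiv ℝ Z x = 0 :=
      Function.notMem_support.1 fun hx' ↦ hx (hZt (support_fderiv_subset ℝ hx'))
    simp [h0]

section

variable {Z : EuclideanSpace ℝ ι → ℝ} {t : Set (EuclideanSpace ℝ ι)}

theorem integrable_fderiv_apply (hZ : ContDiff ℝ 1 Z) (hZc : HasCompactSupport Z)
    (hU : LipschitzOnWith K U t) (hZt : tsupport Z ⊆ t) :
    Integrable (fun x ↦ fderiv ℝ Z x (U x)) μ := by
  classical
  obtain ⟨u, hu, hsum⟩ := exists_lipschitzWith_fderiv_apply_eq_sum hU hZt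
  simp_rw [hsum]
  exact integrable_finsetSum _ fun i _ ↦ integrable_mul_fderiv (hu i).continuous hZ hZc _

theorem abs_integral_fderiv_apply_le (hZ : ContDiff ℝ 1 Z) (hZc : HasCompactSupport Z)
    (hU : LipschitzOnWith K U t) (hZt : tsupport Z ⊆ t) :
    |∫ x, fderiv ℝ Z x (U x) ∂μ| ≤ Fintype.card ι * K * ∫ x, |Z x| ∂μ := by
  classical
  obtain ⟨u, hu, hsum⟩ := exists_lipschitzWith_fderiv_apply_eq_sum hU hZt
  simp_rw [hsum]
  rw [integral_finsetSum _ fun i _ ↦ integrable_mul_fderiv (hu i).continuous hZ hZc _]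
  calc |∑ i, ∫ x, u i x * fderiv ℝ Z x (EuclideanSpace.single i 1) ∂μ|
      ≤ ∑ i, |∫ x, u i x * fderiv ℝ Z x (EuclideanSpace.single i 1) ∂μ| :=
        Finset.abs_sum_le_sum_abs _ _
    _ ≤ ∑ _i : ι, K * ∫ x, |Z x| ∂μ := Finset.sum_le_sum fun i _ ↦
        (abs_integral_mul_fderiv_le (hu i) hZ hZc _).trans_eq (by simp)
    _ = Fintype.card ι * K * ∫ x, |Z x| ∂μ := by simp [mul_assoc]

end

section

variable {s : Set (EuclideanSpace ℝ ι)} {h : EuclideanSpace ℝ ι → ℝ}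

theorem integrableOn_fderiv_apply_of_frontier (hs : MeasurableSet s) (hsb : Bornology.IsBounded s)
    (hh : ContDiff ℝ 1 h) (hfr : ∀ y ∈ frontier s, h y = 0 ∧ fderiv ℝ h y = 0)
    (hU : LipschitzOnWith K U (closure s)) :
    IntegrableOn (fun x ↦ fderiv ℝ h x (U x)) s μ := by
  have hint := integrable_fderiv_apply (μ := μ) (contDiff_one_indicator_of_frontier hh hfr)
    (hsb.hasCompactSupport_indicator h) hU (closure_mono support_indicator_subset)
  rwa [fderiv_indicator_apply_of_frontier (hh.differentiable one_ne_zero) hfr,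
    integrable_indicator_iff hs] at hint

theorem abs_setIntegral_fderiv_apply_le (hs : MeasurableSet s) (hsb : Bornology.IsBounded s)
    (hh : ContDiff ℝ 1 h) (hfr : ∀ y ∈ frontier s, h y = 0 ∧ fderiv ℝ h y = 0)
    (hU : LipschitzOnWith K U (closure s)) :
    |∫ x in s, fderiv ℝ h x (U x) ∂μ| ≤ Fintype.card ι * K * ∫ x in s, |h x| ∂μ := by
  have hbound := abs_integral_fderiv_apply_le (μ := μ) (contDiff_one_indicator_of_frontier hh hfr)
    (hsb.hasCompactSupport_indicator h) hU (closure_mono support_indicator_subset)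
  have habs : (fun x ↦ |s.indicator h x|) = s.indicator (fun x ↦ |h x|) := by
    ext x
    by_cases hx : x ∈ s <;> simp [hx]
  rwa [fderiv_indicator_apply_of_frontier (hh.differentiable one_ne_zero) hfr, habs,
    integral_indicator hs, integral_indicator hs] at hbound

end

end Divergence

theorem ContDiff.exists_lipschitzOnWith_comp {α E F : Type*} [PseudoMetricSpace α]
    [NormedAddCommGroup E] [NormedSpace ℝ E] [FiniteDimensional ℝ E]
    [NormedAddCommGroup F] [NormedSpace ℝ F] {Φ : E → F} (hΦ : ContDiff ℝ 1 Φ)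
    {f : α → E} {s : Set α} {K : ℝ≥0} (hf : LipschitzOnWith K f s) (hs : IsCompact s) :
    ∃ K', LipschitzOnWith K' (Φ ∘ f) s := by
  obtain ⟨r, hr⟩ := (hs.image_of_continuousOn hf.continuousOn).isBounded.subset_closedBall 0
  obtain ⟨K', hK'⟩ := hΦ.contDiffOn.exists_lipschitzOnWith one_ne_zero (convex_closedBall 0 r)
    (isCompact_closedBall 0 r)
  exact ⟨K' * K, hK'.comp hf (mapsTo_iff_image_subset.2 hr)⟩

section Carleman

variable {F : Type*} [NormedAddCommGroup F]

noncomputable def carlemanWeight (x₀ : F) (γ1 c s : ℝ) (x : F) : ℝ :=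
  Real.exp (2 * s * Real.exp (γ1 * (‖x - x₀‖ ^ 2 + c)))

theorem carlemanWeight_pos (x₀ : F) (γ1 c s : ℝ) (x : F) : 0 < carlemanWeight x₀ γ1 c s x :=
  Real.exp_pos _

variable [InnerProductSpace ℝ F]

theorem contDiff_carlemanWeight (x₀ : F) (γ1 c s : ℝ) :
    ContDiff ℝ 1 (carlemanWeight x₀ γ1 c s) := by
  have hsq : ContDiff ℝ 1 fun x : F ↦ ‖x - x₀‖ ^ 2 := (contDiff_id.sub contDiff_const).norm_sq ℝ
  unfold carlemanWeight
  fun_prop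

theorem hasFDerivAt_carlemanWeight (x₀ : F) (γ1 c s : ℝ) (x : F) :
    HasFDerivAt (carlemanWeight x₀ γ1 c s)
      ((4 * s * γ1 * Real.exp (γ1 * (‖x - x₀‖ ^ 2 + c)) * carlemanWeight x₀ γ1 c s x) •
        innerSL ℝ (x - x₀)) x := by
  have h := (((((hasFDerivAt_id x).sub_const x₀).norm_sq.add_const c).const_mul γ1).exp.const_mul
    (2 * s)).exp
  refine h.congr_fderiv ?_
  ext w
  simp [carlemanWeight]
  ring

theorem fderiv_carlemanWeight_mul_sq_apply {x₀ : F} {γ1 c s : ℝ} {f : F → ℝ} {x : F}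
    (hf : DifferentiableAt ℝ f x) (w : F) :
    fderiv ℝ (fun y ↦ carlemanWeight x₀ γ1 c s y * f y ^ 2) x w =
      carlemanWeight x₀ γ1 c s x * (2 * f x * fderiv ℝ f x w) + f x ^ 2 *
        (4 * s * γ1 * Real.exp (γ1 * (‖x - x₀‖ ^ 2 + c)) * carlemanWeight x₀ γ1 c s x *
          ⟪x - x₀, w⟫) := by
  have h : HasFDerivAt (fun y ↦ carlemanWeight x₀ γ1 c s y * f y ^ 2) _ x :=
    (hasFDerivAt_carlemanWeight x₀ γ1 c s x).mul (hf.hasFDerivAt.pow 2)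
  rw [h.fderiv]
  simp only [add_apply, smul_apply, innerSL_apply_apply, smul_eq_mul, nsmul_eq_mul]
  ring

theorem carleman_pointwise_le {s γ1 ρ₀ ρ φ f g P a B c0 : ℝ} (hs : 0 < s) (hγ1 : 0 < γ1)
    (hρ₀ : 0 < ρ₀) (hρ : ρ₀ ≤ ρ) (hφ : 0 ≤ φ) (hc0 : 0 ≤ c0) (hg : c0 ≤ |g|)
    (hB : |a * g| ≤ B) :
    s * (2 * γ1 * ρ₀ * c0 ^ 2) * (φ * f ^ 2) ≤
      φ * (2 * f * (g * (P - a * f))) + f ^ 2 * (4 * s * γ1 * ρ * φ * (g * g)) +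
        2 * B * (φ * f ^ 2) + φ * P ^ 2 / (s * (2 * γ1 * ρ₀)) := by
  set t := 2 * s * γ1 * ρ
  have ht₀ : s * (2 * γ1 * ρ₀) ≤ t := by simp only [t]; nlinarith [mul_pos hs hγ1]
  have ht : 0 < t := (by positivity : 0 < s * (2 * γ1 * ρ₀)).trans_le ht₀
  have hyoung : -(2 * f * g * P) ≤ t * (g ^ 2 * f ^ 2) + P ^ 2 / t := by
    have hsq : t * (g ^ 2 * f ^ 2) + P ^ 2 / t + 2 * f * g * P = (t * g * f + P) ^ 2 / t := by
      field_simp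
      ring
    have : 0 ≤ (t * g * f + P) ^ 2 / t := by positivity
    linarith
  have hlow : s * (2 * γ1 * ρ₀ * c0 ^ 2) ≤ t * g ^ 2 := by
    have hc : c0 ^ 2 ≤ g ^ 2 := by simpa [sq_abs] using pow_le_pow_left₀ hc0 hg 2
    nlinarith [mul_le_mul ht₀ hc (sq_nonneg c0) ht.le]
  have hP : P ^ 2 / t ≤ P ^ 2 / (s * (2 * γ1 * ρ₀)) :=
    div_le_div_of_nonneg_left (sq_nonneg P) (by positivity) ht₀
  have hφf : 0 ≤ φ * f ^ 2 := by positivity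
  have hD : f ^ 2 * (4 * s * γ1 * ρ * φ * (g * g)) = 2 * t * (φ * (g ^ 2 * f ^ 2)) := by
    simp only [t]
    ring
  rw [hD]
  linear_combination mul_le_mul_of_nonneg_left hyoung hφ + mul_le_mul_of_nonneg_right hlow hφf +
    mul_le_mul_of_nonneg_left hP hφ +
    2 * mul_le_mul_of_nonneg_right ((le_abs_self _).trans hB) hφf

theorem le_fderiv_carlemanWeight_mul_sq_apply {x₀ : F} {γv : F → F} {γ0 f : F → ℝ} {x : F}
    {B c0 γ1 c s : ℝ} (hf : DifferentiableAt ℝ f x) (hc0 : 0 ≤ c0)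
    (hnc : c0 ≤ |⟪γv x, x - x₀⟫|) (hB : |γ0 x * ⟪γv x, x - x₀⟫| ≤ B) (hγ1 : 0 < γ1)
    (hs : 0 < s) :
    s * (2 * γ1 * Real.exp (γ1 * c) * c0 ^ 2) * (carlemanWeight x₀ γ1 c s x * f x ^ 2) ≤
      fderiv ℝ (fun y ↦ carlemanWeight x₀ γ1 c s y * f y ^ 2) x (⟪γv x, x - x₀⟫ • γv x) +
        2 * B * (carlemanWeight x₀ γ1 c s x * f x ^ 2) +
        carlemanWeight x₀ γ1 c s x * (fderiv ℝ f x (γv x) + γ0 x * f x) ^ 2 /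
          (s * (2 * γ1 * Real.exp (γ1 * c))) := by
  have hρ : Real.exp (γ1 * c) ≤ Real.exp (γ1 * (‖x - x₀‖ ^ 2 + c)) :=
    Real.exp_le_exp.2 (by nlinarith [sq_nonneg ‖x - x₀‖])
  have := carleman_pointwise_le (f := f x) (P := fderiv ℝ f x (γv x) + γ0 x * f x) hs hγ1
    (Real.exp_pos _) hρ (carlemanWeight_pos x₀ γ1 c s x).le hc0 hnc hB
  rw [fderiv_carlemanWeight_mul_sq_apply hf]
  simpa only [map_smul, smul_eq_mul, inner_smul_right, real_inner_comm (x - x₀),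
    add_sub_cancel_right] using this

end Carleman

section

variable {ι : Type*} [Fintype ι] {Ω : Set (EuclideanSpace ℝ ι)} {x₀ : EuclideanSpace ℝ ι}
  {γv : EuclideanSpace ℝ ι → EuclideanSpace ℝ ι} {γ0 f : EuclideanSpace ℝ ι → ℝ}

theorem mul_setIntegral_carlemanWeight_mul_sq_le {K : ℝ≥0} {B c0 γ1 c s : ℝ} (hΩo : IsOpen Ω)
    (hΩb : Bornology.IsBounded Ω) (hγ : ContinuousOn γv (closure Ω))
    (hγ0 : ContinuousOn γ0 (closure Ω))
    (hU : LipschitzOnWith K (fun x ↦ ⟪γv x, x - x₀⟫ • γv x) (closure Ω))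
    (hB : ∀ x ∈ Ω, |γ0 x * ⟪γv x, x - x₀⟫| ≤ B) (hc0 : 0 ≤ c0)
    (hnc : ∀ x ∈ Ω, c0 ≤ |⟪γv x, x - x₀⟫|) (hγ1 : 0 < γ1) (hs : 0 < s)
    (hf : ContDiff ℝ 1 f) (hf0 : ∀ x ∈ frontier Ω, f x = 0) :
    s * (2 * γ1 * Real.exp (γ1 * c) * c0 ^ 2) *
        ∫ x in Ω, carlemanWeight x₀ γ1 c s x * f x ^ 2 ≤
      (Fintype.card ι * K + 2 * B) * (∫ x in Ω, carlemanWeight x₀ γ1 c s x * f x ^ 2) +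
        (∫ x in Ω, carlemanWeight x₀ γ1 c s x * (⟪γv x, gradient f x⟫ + γ0 x * f x) ^ 2) /
          (s * (2 * γ1 * Real.exp (γ1 * c))) := by
  simp only [inner_gradient_right, conj_trivial]
  set φ := carlemanWeight x₀ γ1 c s
  set h : EuclideanSpace ℝ ι → ℝ := fun y ↦ φ y * f y ^ 2
  set D : EuclideanSpace ℝ ι → ℝ := fun x ↦ fderiv ℝ h x (⟪γv x, x - x₀⟫ • γv x)
  set Q : EuclideanSpace ℝ ι → ℝ := fun x ↦ φ x * (fderiv ℝ f x (γv x) + γ0 x * f x) ^ 2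
  have hfd := hf.differentiable one_ne_zero
  have hh : ContDiff ℝ 1 h := (contDiff_carlemanWeight x₀ γ1 c s).mul (hf.pow 2)
  have hfr : ∀ y ∈ frontier Ω, h y = 0 ∧ fderiv ℝ h y = 0 := fun y hy ↦
    ⟨by simp [h, hf0 y hy],
      by ext w; simp [h, φ, fderiv_carlemanWeight_mul_sq_apply (hfd y), hf0 y hy]⟩
  have hΩm := hΩo.measurableSet
  have hcpt := hΩb.isCompact_closure
  have iI : IntegrableOn h Ω :=
    (hh.continuous.continuousOn.integrableOn_compact hcpt).mono_set subset_closure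
  have iQ : IntegrableOn Q Ω := by
    refine (ContinuousOn.integrableOn_compact hcpt ?_).mono_set subset_closure
    exact (contDiff_carlemanWeight x₀ γ1 c s).continuous.continuousOn.mul
      ((((hf.continuous_fderiv one_ne_zero).continuousOn.clm_apply hγ).add
        (hγ0.mul hf.continuous.continuousOn)).pow 2)
  have iD : IntegrableOn D Ω := integrableOn_fderiv_apply_of_frontier hΩm hΩb hh hfr hU
  have iDB : IntegrableOn (fun x ↦ D x + 2 * B * h x) Ω := iD.add (iI.const_mul _)
  have hdiv : |∫ x in Ω, D x| ≤ Fintype.card ι * K * ∫ x in Ω, h x := by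
    have hh0 : ∀ x, 0 ≤ h x := fun x ↦ mul_nonneg (carlemanWeight_pos x₀ γ1 c s x).le (sq_nonneg _)
    simpa only [abs_of_nonneg (hh0 _)] using
      abs_setIntegral_fderiv_apply_le (μ := volume) hΩm hΩb hh hfr hU
  have hmono : ∫ x in Ω, s * (2 * γ1 * Real.exp (γ1 * c) * c0 ^ 2) * h x ≤
      ∫ x in Ω, (D x + 2 * B * h x + Q x / (s * (2 * γ1 * Real.exp (γ1 * c)))) :=
    setIntegral_mono_on (iI.const_mul _) (iDB.add (iQ.div_const _)) hΩm fun x hx ↦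
      le_fderiv_carlemanWeight_mul_sq_apply (hfd x) hc0 (hnc x hx) (hB x hx) hγ1 hs
  rw [integral_add iDB (iQ.div_const _), integral_add iD (iI.const_mul _),
    integral_const_mul, integral_const_mul, integral_div] at hmono
  linarith [le_abs_self (∫ x in Ω, D x)]

end

theorem sq_mul_le_of_mul_le_add_div {s a b c I J : ℝ} (ha : 0 < a) (hb : 0 < b) (hs : 0 < s)
    (hI : 0 ≤ I) (hsc : 2 * c ≤ s * a) (h : s * a * I ≤ c * I + J / (s * b)) :
    s ^ 2 * I ≤ 2 / (a * b) * J := by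
  have hcI : c * I ≤ s * a / 2 * I := mul_le_mul_of_nonneg_right (by linarith) hI
  have key : s * a * I / 2 * (s * b) ≤ J := (le_div_iff₀ (by positivity)).1 (by linarith)
  rw [div_mul_eq_mul_div, le_div_iff₀ (by positivity)]
  nlinarith

theorem stmt_5_general (Ω : Set E3) (hΩo : IsOpen Ω) (hΩb : Bornology.IsBounded Ω) (x₀ : E3)
    (γv : E3 → E3) (γ0 : E3 → ℝ) (K K0 : NNReal)
    (hγ : LipschitzOnWith K γv (closure Ω)) (hγ0 : LipschitzOnWith K0 γ0 (closure Ω))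
    (c0 : ℝ) (hc0 : 0 < c0)
    (hnc : ∀ x ∈ closure Ω, c0 ≤ |(inner ℝ (γv x) (x - x₀) : ℝ)|)
    (γ1 β M : ℝ) (hγ1 : 0 < γ1) :
    ∃ sstar > 0, ∃ C > 0, ∀ s ≥ sstar, ∀ f : E3 → ℝ, ContDiff ℝ 2 f →
      (∀ x ∈ frontier Ω, f x = 0 ∧ gradient f x = 0) →
      s ^ 2 * (∫ x in Ω, Real.exp (2 * s * Real.exp (γ1 * (‖x - x₀‖ ^ 2 + β * M))) * |f x| ^ 2)
        ≤ C * ∫ x in Ω, Real.exp (2 * s * Real.exp (γ1 * (‖x - x₀‖ ^ 2 + β * M))) *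
            |(inner ℝ (γv x) (gradient f x) : ℝ) + γ0 x * f x| ^ 2 := by
  have hcpt := hΩb.isCompact_closure
  have hΦ : ContDiff ℝ 1 (fun p : E3 × E3 ↦ ⟪p.2, p.1 - x₀⟫ • p.2) :=
    (contDiff_snd.inner ℝ (contDiff_fst.sub contDiff_const)).smul contDiff_snd
  obtain ⟨KU, hU⟩ :=
    hΦ.exists_lipschitzOnWith_comp (LipschitzWith.id.lipschitzOnWith.prodMk hγ) hcpt
  obtain ⟨B, hB⟩ := hcpt.exists_bound_of_continuousOn
    (hγ0.continuousOn.mul (hγ.continuousOn.inner (continuousOn_id.sub continuousOn_const)))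
  set a := 2 * γ1 * Real.exp (γ1 * (β * M)) * c0 ^ 2
  set b := 2 * γ1 * Real.exp (γ1 * (β * M))
  have ha : 0 < a := by positivity
  refine ⟨max 1 (2 * (3 * KU + 2 * B) / a), by positivity, 2 / (a * b), by positivity,
    fun s hs f hf hbc ↦ ?_⟩
  have hs0 : 0 < s := zero_lt_one.trans_le ((le_max_left _ _).trans hs)
  have hsc : 2 * (3 * KU + 2 * B) ≤ s * a := (div_le_iff₀ ha).1 ((le_max_right _ _).trans hs)
  simp only [sq_abs]
  refine sq_mul_le_of_mul_le_add_div ha (by positivity) hs0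
    (setIntegral_nonneg hΩo.measurableSet fun x _ ↦ by positivity) hsc ?_
  have key := mul_setIntegral_carlemanWeight_mul_sq_le (c := β * M) hΩo hΩb hγ.continuousOn hγ0.continuousOn hU
    (fun x hx ↦ by simpa using hB x (subset_closure hx)) hc0.le
    (fun x hx ↦ hnc x (subset_closure hx)) hγ1 hs0 (hf.of_le one_le_two) (fun x hx ↦ (hbc x hx).1)
  rwa [Fintype.card_fin, Nat.cast_ofNat] at key

/-- Lemma 3.8 (first estimate): Carleman estimate for the first-order operator
`P(x,D)f = γ(x)·∇f + γ₀(x) f` with non-characteristic weight `ρ(x) = e^{γ₁(|x-x₀|² + βM)}`: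
`s² ∫ e^{2sρ} |f|² ≤ C ∫ e^{2sρ} |P f|²` for `s` large and `f ∈ H²` with `f = ∇f = 0` on `∂Ω`. -/
theorem stmt_5 (Ω : Set E3) (hΩo : IsOpen Ω) (hΩb : Bornology.IsBounded Ω) (x₀ : E3)
    (γv : E3 → E3) (γ0 : E3 → ℝ) (K K0 : NNReal)
    (hγ : LipschitzOnWith K γv (closure Ω)) (hγ0 : LipschitzOnWith K0 γ0 (closure Ω))
    (c0 : ℝ) (hc0 : 0 < c0)
    (hnc : ∀ x ∈ closure Ω, c0 ≤ |(inner ℝ (γv x) (x - x₀) : ℝ)|)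
    (γ1 β M : ℝ) (hγ1 : 0 < γ1) (hβ : 0 < β) (hM : 0 < M) :
    ∃ sstar > 0, ∃ C > 0, ∀ s ≥ sstar, ∀ f : E3 → ℝ, ContDiff ℝ 2 f →
      (∀ x ∈ frontier Ω, f x = 0 ∧ gradient f x = 0) →
      s ^ 2 * (∫ x in Ω, Real.exp (2 * s * Real.exp (γ1 * (‖x - x₀‖ ^ 2 + β * M))) * |f x| ^ 2)
        ≤ C * ∫ x in Ω, Real.exp (2 * s * Real.exp (γ1 * (‖x - x₀‖ ^ 2 + β * M))) *
            |(inner ℝ (γv x) (gradient f x) : ℝ) + γ0 x * f x| ^ 2 :=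
  stmt_5_general Ω hΩo hΩb x₀ γv γ0 K K0 hγ hγ0 c0 hc0 hnc γ1 β M hγ1
end
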